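/- Let a₀, b₀, a₁ be a V-path in which a₀ = S is a face sequence of type 3, and write a₁ = S′. Then either (i) S′ is of type 4 or 10 and the rightmost ∗ of S′ occupies the same position as the rightmost ∗ of S, or (ii) S′ is of type 1, 4, 6 or 10 and S′ has a 0 at the position of the rightmost ∗ of S. -/

import Mathlib

set_option linter.unusedVariables false

/-- The alphabet `{0, 1, ∗}` for face sequences. -/
inductive Letter : Type
  | zero
  | one
  | star
  deriving DecidableEq

/-- A sequence of length `n` over the alphabet `{0, 1, ∗}`. -/
abbrev FSeq (n : ℕ) := Fin n → Letter

/-- `S(1)`, the number of `1`'s in `S`. -/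
def count1 {n : ℕ} (S : FSeq n) : ℕ := (Finset.univ.filter fun i => S i = Letter.one).card

/-- `S(0)`, the number of `0`'s in `S`. -/
def count0 {n : ℕ} (S : FSeq n) : ℕ := (Finset.univ.filter fun i => S i = Letter.zero).card

/-- The number of `∗`'s in `S`. -/
def countStar {n : ℕ} (S : FSeq n) : ℕ := (Finset.univ.filter fun i => S i = Letter.star).card

/-- A face sequence: either no `∗` and exactly `k` ones, or at most `k-1` ones and
(#ones) + (#stars) ≥ `k+1`. -/
def FaceSeq {n : ℕ} (k : ℕ) (S : FSeq n) : Prop :=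
  (countStar S = 0 ∧ count1 S = k) ∨ (count1 S + 1 ≤ k ∧ k + 1 ≤ count1 S + countStar S)

/-- `v₀`, the sequence of `k` ones followed by `n - k` zeros. -/
def v0seq (n k : ℕ) : FSeq n := fun i => if (i : ℕ) < k then Letter.one else Letter.zero

/-- `S` contains at least one `∗`. -/
def hasStar {n : ℕ} (S : FSeq n) : Prop := ∃ i, S i = Letter.star

/-- There is a `1` to the right of the rightmost `∗` (in particular `S` contains a `∗`). -/
def OneRight {n : ℕ} (S : FSeq n) : Prop :=
  hasStar S ∧ ∃ i, S i = Letter.one ∧ ∀ j, i < j → S j ≠ Letter.star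

/-- There is no `1` to the right of the rightmost `∗` (and `S` contains a `∗`). -/
def NoOneRight {n : ℕ} (S : FSeq n) : Prop :=
  hasStar S ∧ ∀ i, S i = Letter.one → ∃ j, i < j ∧ S j = Letter.star

/-- There is a `0` to the left of the leftmost `∗` (in particular `S` contains a `∗`). -/
def ZeroLeft {n : ℕ} (S : FSeq n) : Prop :=
  hasStar S ∧ ∃ i, S i = Letter.zero ∧ ∀ j, j < i → S j ≠ Letter.star

/-- There is no `0` to the left of the leftmost `∗` (and `S` contains a `∗`). -/
def NoZeroLeft {n : ℕ} (S : FSeq n) : Prop :=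
  hasStar S ∧ ∀ i, S i = Letter.zero → ∃ j, j < i ∧ S j = Letter.star

/-- `i` is the position of the rightmost `1` of `S`. -/
def IsRightmostOne {n : ℕ} (S : FSeq n) (i : Fin n) : Prop :=
  S i = Letter.one ∧ ∀ j, i < j → S j ≠ Letter.one

/-- `i` is the position of the rightmost `∗` of `S`. -/
def IsRightmostStar {n : ℕ} (S : FSeq n) (i : Fin n) : Prop :=
  S i = Letter.star ∧ ∀ j, i < j → S j ≠ Letter.star

/-- `i` is the position of the leftmost `0` of `S`. -/
def IsLeftmostZero {n : ℕ} (S : FSeq n) (i : Fin n) : Prop :=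
  S i = Letter.zero ∧ ∀ j, j < i → S j ≠ Letter.zero

/-- `i` is the position of the leftmost `∗` of `S`. -/
def IsLeftmostStar {n : ℕ} (S : FSeq n) (i : Fin n) : Prop :=
  S i = Letter.star ∧ ∀ j, j < i → S j ≠ Letter.star

/-- Condition of rule (1), subcondition (a). -/
def Cond1a {n : ℕ} (k m0 m1 : ℕ) (S : FSeq n) : Prop :=
  count1 S + 1 ≤ k ∧ OneRight S ∧ count1 S ≠ m1

/-- Condition of rule (1), subcondition (b). -/
def Cond1b {n : ℕ} (k m0 m1 : ℕ) (S : FSeq n) : Prop :=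
  count1 S + 1 ≤ k ∧ OneRight S ∧ count1 S = m1 ∧ m0 < count0 S

/-- Condition of rule (1), subcondition (c): no `0` to the left of the leftmost `∗`. -/
def Cond1c {n : ℕ} (k m0 m1 : ℕ) (S : FSeq n) : Prop :=
  count1 S + 1 ≤ k ∧ OneRight S ∧ count1 S = m1 ∧ count0 S = m0 ∧ NoZeroLeft S

/-- Condition of rule (2), subcondition (a): here `count1 S + 1 ≠ m1` encodes `S(1) ≠ m₁ - 1`. -/
def Cond2a {n : ℕ} (k m0 m1 : ℕ) (S : FSeq n) : Prop :=
  count1 S + 2 ≤ k ∧ NoOneRight S ∧ count1 S + 1 ≠ m1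

/-- Condition of rule (2), subcondition (b). -/
def Cond2b {n : ℕ} (k m0 m1 : ℕ) (S : FSeq n) : Prop :=
  count1 S + 2 ≤ k ∧ NoOneRight S ∧ count1 S + 1 = m1 ∧ m0 < count0 S

/-- Condition of rule (2), subcondition (c). -/
def Cond2c {n : ℕ} (k m0 m1 : ℕ) (S : FSeq n) : Prop :=
  count1 S + 2 ≤ k ∧ NoOneRight S ∧ count1 S + 1 = m1 ∧ count0 S = m0 ∧ NoZeroLeft S

/-- `S` is of type 1 (satisfies the condition of rule (1)). -/
def Type1 {n : ℕ} (k m0 m1 : ℕ) (S : FSeq n) : Prop :=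
  Cond1a k m0 m1 S ∨ Cond1b k m0 m1 S ∨ Cond1c k m0 m1 S

/-- `S` is of type 2 (satisfies the condition of rule (2)). -/
def Type2 {n : ℕ} (k m0 m1 : ℕ) (S : FSeq n) : Prop :=
  Cond2a k m0 m1 S ∨ Cond2b k m0 m1 S ∨ Cond2c k m0 m1 S

/-- `S` is of type 3: `S(1) = k-1`, `S(0) ≤ n-k-1`, no `1` right of the rightmost `∗`,
a `0` left of the leftmost `∗`. -/
def Type3 {n : ℕ} (k : ℕ) (S : FSeq n) : Prop :=
  count1 S + 1 = k ∧ count0 S + k + 1 ≤ n ∧ NoOneRight S ∧ ZeroLeft S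

/-- `S` is of type 4: `S(1) = k-1`, `S(0) ≤ n-k-2`, no `1` right of the rightmost `∗`,
no `0` left of the leftmost `∗`. -/
def Type4 {n : ℕ} (k : ℕ) (S : FSeq n) : Prop :=
  count1 S + 1 = k ∧ count0 S + k + 2 ≤ n ∧ NoOneRight S ∧ NoZeroLeft S

/-- `S` is of type 5: `S(1) = m₁`, `S(0) ≤ m₀`, a `1` right of the rightmost `∗`,
a `0` left of the leftmost `∗`. -/
def Type5 {n : ℕ} (m0 m1 : ℕ) (S : FSeq n) : Prop :=
  count1 S = m1 ∧ count0 S ≤ m0 ∧ OneRight S ∧ ZeroLeft S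

/-- `S` is of type 6: `S(1) = m₁`, `S(0) < m₀`, a `1` right of the rightmost `∗`,
no `0` left of the leftmost `∗`. -/
def Type6 {n : ℕ} (m0 m1 : ℕ) (S : FSeq n) : Prop :=
  count1 S = m1 ∧ count0 S < m0 ∧ OneRight S ∧ NoZeroLeft S

/-- `S` is of type 7: `S(1) = m₁-1`, `S(0) ≤ m₀`, no `1` right of the rightmost `∗`,
a `0` left of the leftmost `∗`. -/
def Type7 {n : ℕ} (m0 m1 : ℕ) (S : FSeq n) : Prop :=
  count1 S + 1 = m1 ∧ count0 S ≤ m0 ∧ NoOneRight S ∧ ZeroLeft S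

/-- `S` is of type 8: `S(1) = m₁-1`, `S(0) < m₀`, no `1` right of the rightmost `∗`,
no `0` left of the leftmost `∗`. -/
def Type8 {n : ℕ} (m0 m1 : ℕ) (S : FSeq n) : Prop :=
  count1 S + 1 = m1 ∧ count0 S < m0 ∧ NoOneRight S ∧ NoZeroLeft S

/-- `S` is of type 9: `S(1) = k`, `S(0) = n-k`, and `S ≠ v₀`. -/
def Type9 {n : ℕ} (k : ℕ) (S : FSeq n) : Prop :=
  count1 S = k ∧ count0 S + k = n ∧ S ≠ v0seq n k

/-- `S` is of type 10: `S(1) = k-1`, `S(0) = n-k-1`, no `1` right of the rightmost `∗`,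
no `0` left of the leftmost `∗`. -/
def Type10 {n : ℕ} (k : ℕ) (S : FSeq n) : Prop :=
  count1 S + 1 = k ∧ count0 S + k + 1 = n ∧ NoOneRight S ∧ NoZeroLeft S

/-- `S` is of type `i` for `1 ≤ i ≤ 10` (and of no type otherwise). -/
def OfType {n : ℕ} (k m0 m1 : ℕ) (i : ℕ) (S : FSeq n) : Prop :=
  match i with
  | 1 => Type1 k m0 m1 S
  | 2 => Type2 k m0 m1 S
  | 3 => Type3 k S
  | 4 => Type4 k S
  | 5 => Type5 m0 m1 S
  | 6 => Type6 m0 m1 S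
  | 7 => Type7 m0 m1 S
  | 8 => Type8 m0 m1 S
  | 9 => Type9 k S
  | 10 => Type10 k S
  | _ => False

/-- The replacement of rule (1): replace the rightmost `1` with `∗`. -/
def Apply1 {n : ℕ} (S S' : FSeq n) : Prop :=
  ∃ i, IsRightmostOne S i ∧ S' = Function.update S i Letter.star

/-- The replacement of rule (2): replace the rightmost `∗` with `1`. -/
def Apply2 {n : ℕ} (S S' : FSeq n) : Prop :=
  ∃ i, IsRightmostStar S i ∧ S' = Function.update S i Letter.one

/-- The replacement of rules (3), (5) and (7): replace the leftmost `0` with `∗`. -/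
def Apply3 {n : ℕ} (S S' : FSeq n) : Prop :=
  ∃ i, IsLeftmostZero S i ∧ S' = Function.update S i Letter.star

/-- The replacement of rules (4), (6) and (8): replace the leftmost `∗` with `0`. -/
def Apply4 {n : ℕ} (S S' : FSeq n) : Prop :=
  ∃ i, IsLeftmostStar S i ∧ S' = Function.update S i Letter.zero

/-- The replacement of rule (9): replace the leftmost `0` and the rightmost `1` each with `∗`. -/
def Apply9 {n : ℕ} (S S' : FSeq n) : Prop :=
  ∃ i j, IsLeftmostZero S i ∧ IsRightmostOne S j ∧
    S' = Function.update (Function.update S i Letter.star) j Letter.star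

/-- The replacement of rule (10): replace the leftmost `∗` with `0` and the other `∗` with `1`. -/
def Apply10 {n : ℕ} (S S' : FSeq n) : Prop :=
  ∃ i j, IsLeftmostStar S i ∧ IsRightmostStar S j ∧ i ≠ j ∧
    S' = Function.update (Function.update S i Letter.zero) j Letter.one

/-- The matching `V` on face sequences: a face sequence `S` of type 1, 3, 5, 7 or 9 is
matched with the result `S'` of applying the corresponding rule to it. -/
def Vmatch {n : ℕ} (k m0 m1 : ℕ) (S S' : FSeq n) : Prop :=
  FaceSeq k S ∧
    ((Type1 k m0 m1 S ∧ Apply1 S S') ∨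
     (Type3 k S ∧ Apply3 S S') ∨
     (Type5 m0 m1 S ∧ Apply3 S S') ∨
     (Type7 m0 m1 S ∧ Apply3 S S') ∨
     (Type9 k S ∧ Apply9 S S'))

/-- The vertex set of a face sequence `S`: the vertex sequences (0/1-sequences with
exactly `k` ones) agreeing with `S` wherever `S` is not `∗`. -/
def VertexSet {n : ℕ} (k : ℕ) (S : FSeq n) : Set (FSeq n) :=
  {v | (∀ i, v i ≠ Letter.star) ∧ count1 v = k ∧ ∀ i, S i ≠ Letter.star → v i = S i}

/-- The dimension of the face `F(S)`. -/
def fdim {n : ℕ} (S : FSeq n) : ℕ :=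
  if countStar S = 0 then 0 else countStar S - 1

/-- `T` is a codimension-1 face of `S`. -/
def Codim1 {n : ℕ} (k : ℕ) (T S : FSeq n) : Prop :=
  VertexSet k T ⊂ VertexSet k S ∧ fdim T + 1 = fdim S

/-- A (nontrivial) `V`-path `a₀, b₀, a₁, b₁, …, b_r, a_{r+1}` of face sequences. -/
structure VPath (n k m0 m1 r : ℕ) where
  a : Fin (r + 2) → FSeq n
  b : Fin (r + 1) → FSeq n
  face_a : ∀ i, FaceSeq k (a i)
  face_b : ∀ i, FaceSeq k (b i)
  mem : ∀ i : Fin (r + 1), Vmatch k m0 m1 (a i.castSucc) (b i)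
  codim_left : ∀ i : Fin (r + 1), Codim1 k (a i.castSucc) (b i)
  codim_right : ∀ i : Fin (r + 1), Codim1 k (a i.succ) (b i)
  step_ne : ∀ i : Fin (r + 1), a i.castSucc ≠ a i.succ

/-!
Being of type 3, `S = a₀` is of none of the types 1, 5, 7, 9, so `b₀` is `S` with its leftmost
zero `p` turned into a star. A codimension-1 face `a₁ ≠ S` of `b₀` resolves a single star `q ≠ p`
of `b₀`, and to a `0`, since `b₀` already carries `k - 1` ones. So `a₁` is `S` with the star at
`q` moved to `p`, which lies left of all stars of `S`: `a₁` has the counts of `S` and no `0` left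
of its leftmost star. If `q` is not the rightmost star `t` of `S`, then `t` stays the rightmost
star of `a₁` and still has every `1` to its left (types 4, 10); if `q = t`, then `a₁` has a `0`
at `t`, and is of type 1 or 6, or of type 4 or 10, according as a `1` follows its rightmost star.
-/

open Finset Function

section Counting

variable {α β : Type*} [Fintype α] [DecidableEq α] [DecidableEq β]

lemma card_filter_update_add (f : α → β) (p : α) (d e : β) :
    #{i | update f p d i = e} + (if f p = e then 1 else 0)
      = #{i | f i = e} + (if d = e then 1 else 0) := by
  have h : (fun i => if update f p d i = e then 1 else 0)
      = update (fun i => if f i = e then 1 else 0) p (if d = e then 1 else 0) := by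
    funext i
    rcases eq_or_ne i p with rfl | hi <;> simp [*]
  rw [card_filter, card_filter, h, sum_update_of_mem (mem_univ p),
    sum_eq_sum_sdiff_singleton_add (mem_univ p) (fun i => if f i = e then 1 else 0)]
  omega

end Counting

variable {n k : ℕ}

lemma count1_update_add (S : FSeq n) (p : Fin n) (d : Letter) :
    count1 (update S p d) + (if S p = .one then 1 else 0)
      = count1 S + (if d = .one then 1 else 0) :=
  card_filter_update_add S p d .one

lemma count0_update_add (S : FSeq n) (p : Fin n) (d : Letter) :
    count0 (update S p d) + (if S p = .zero then 1 else 0)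
      = count0 S + (if d = .zero then 1 else 0) :=
  card_filter_update_add S p d .zero

lemma countStar_update_add (S : FSeq n) (p : Fin n) (d : Letter) :
    countStar (update S p d) + (if S p = .star then 1 else 0)
      = countStar S + (if d = .star then 1 else 0) :=
  card_filter_update_add S p d .star

lemma countStar_pos {S : FSeq n} {i : Fin n} (hi : S i = .star) : 0 < countStar S :=
  card_pos.2 ⟨i, by simpa using hi⟩

lemma FaceSeq.count_bounds {S : FSeq n} (hS : FaceSeq k S) {i : Fin n} (hi : S i = .star) :
    count1 S + 1 ≤ k ∧ k + 1 ≤ count1 S + countStar S :=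
  hS.resolve_left fun h => (countStar_pos hi).ne' h.1

lemma exists_isRightmostStar {S : FSeq n} (h : hasStar S) : ∃ t, IsRightmostStar S t := by
  obtain ⟨i, hi⟩ := h
  have hne : ({j | S j = .star} : Finset (Fin n)).Nonempty := ⟨i, by simpa using hi⟩
  refine ⟨_, by simpa using max'_mem _ hne, fun j hj hs => ?_⟩
  exact (le_max' _ j (by simpa using hs)).not_gt hj

lemma IsRightmostStar.le {S : FSeq n} {t j : Fin n} (ht : IsRightmostStar S t)
    (hj : S j = .star) : j ≤ t :=
  not_lt.1 fun htj => ht.2 j htj hj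

lemma NoOneRight.not_oneRight {S : FSeq n} (h : NoOneRight S) : ¬ OneRight S := by
  rintro ⟨-, i, hi, hright⟩
  obtain ⟨j, hij, hj⟩ := h.2 i hi
  exact hright j hij hj

lemma oneRight_or_noOneRight {S : FSeq n} (h : hasStar S) : OneRight S ∨ NoOneRight S := by
  by_cases hR : ∃ i, S i = .one ∧ ∀ j, i < j → S j ≠ .star
  · exact Or.inl ⟨h, hR⟩
  · push Not at hR
    exact Or.inr ⟨h, hR⟩

lemma ZeroLeft.lt_of_isLeftmostZero {S : FSeq n} (h : ZeroLeft S) {p u : Fin n}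
    (hp : IsLeftmostZero S p) (hu : S u = .star) : p < u := by
  obtain ⟨-, z, hz, hzleft⟩ := h
  have hpz : p ≤ z := not_lt.1 fun hzp => hp.2 z hzp hz
  refine lt_of_not_ge fun hup => ?_
  rcases hup.lt_or_eq with hup | rfl
  · exact hzleft u (hup.trans_le hpz) hu
  · exact absurd (hp.1.symm.trans hu) (by simp)

section Vertices

def fillStars (T : FSeq n) (A : Finset (Fin n)) : FSeq n :=
  fun i => if i ∈ A then .one else if T i = .star then .zero else T i

lemma fillStars_mem_vertexSet {T : FSeq n} {A : Finset (Fin n)}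
    (hA : ∀ i ∈ A, T i = .star) (hcard : count1 T + #A = k) :
    fillStars T A ∈ VertexSet k T := by
  refine ⟨fun i => ?_, ?_, fun i hi => ?_⟩
  · unfold fillStars; split_ifs <;> simp_all
  · have hones : ({i | fillStars T A i = .one} : Finset (Fin n))
        = A ∪ ({i | T i = .one} : Finset (Fin n)) := by
      ext i
      unfold fillStars
      by_cases hiA : i ∈ A <;> by_cases hTi : T i = .star <;> simp [hiA, hTi]
    have hdisj : Disjoint A ({i | T i = .one} : Finset (Fin n)) :=
      disjoint_left.2 fun i hiA hi => by simp only [mem_filter, hA i hiA] at hi; simp at hi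
    rw [count1, hones, card_union_of_disjoint hdisj]
    exact (Nat.add_comm _ _).trans hcard
  · have hiA : i ∉ A := fun h => hi (hA i h)
    simp [fillStars, hiA, hi]

lemma exists_mem_vertexSet_apply_eq {T : FSeq n} (hT : FaceSeq k T) {i : Fin n}
    (hi : T i = .star) {c : Letter} (hc : c ≠ .star) : ∃ v ∈ VertexSet k T, v i = c := by
  obtain ⟨h1, h2⟩ := hT.count_bounds hi
  set others := ({j | T j = .star} : Finset (Fin n)).erase i
  have hothers : #others = countStar T - 1 := card_erase_of_mem (by simpa using hi)
  have hstar : ∀ j ∈ others, T j = .star := fun j hj => by simpa using (mem_erase.1 hj).2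
  have hi_notMem : ∀ A ⊆ others, i ∉ A := fun A hA h => (mem_erase.1 (hA h)).1 rfl
  cases c with
  | zero =>
    obtain ⟨A, hA, hcard⟩ := exists_subset_card_eq (s := others) (n := k - count1 T) (by omega)
    refine ⟨_, fillStars_mem_vertexSet (fun j hj => hstar j (hA hj)) (by omega), ?_⟩
    simp [fillStars, hi_notMem A hA, hi]
  | one =>
    obtain ⟨A, hA, hcard⟩ :=
      exists_subset_card_eq (s := others) (n := k - count1 T - 1) (by omega)
    refine ⟨fillStars T (insert i A), fillStars_mem_vertexSet ?_ ?_, by simp [fillStars]⟩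
    · simpa [hi] using fun j hj => hstar j (hA hj)
    · rw [card_insert_of_notMem (hi_notMem A hA)]; omega
  | star => exact absurd rfl hc

variable {T B : FSeq n}

lemma apply_eq_star_of_vertexSet_subset (hT : FaceSeq k T)
    (hsub : VertexSet k T ⊆ VertexSet k B) {i : Fin n} (hi : T i = .star) : B i = .star := by
  by_contra hB
  obtain ⟨v, hv, hv0⟩ := exists_mem_vertexSet_apply_eq hT hi (c := .zero) (by simp)
  obtain ⟨w, hw, hw1⟩ := exists_mem_vertexSet_apply_eq hT hi (c := .one) (by simp)
  have := ((hsub hv).2.2 i hB).trans ((hsub hw).2.2 i hB).symm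
  simp [hv0, hw1] at this

lemma apply_eq_of_vertexSet_subset (hT : FaceSeq k T) (hstar : hasStar T)
    (hsub : VertexSet k T ⊆ VertexSet k B) {i : Fin n} (hTi : T i ≠ .star) (hBi : B i ≠ .star) :
    T i = B i := by
  obtain ⟨j, hj⟩ := hstar
  obtain ⟨v, hv, -⟩ := exists_mem_vertexSet_apply_eq hT hj (c := .zero) (by simp)
  exact (hv.2.2 i hTi).symm.trans ((hsub hv).2.2 i hBi)

/-- This fails for an edge `B`, whose vertices resolve both of its stars. -/
lemma Codim1.exists_eq_update (hT : FaceSeq k T) (hcod : Codim1 k T B)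
    (hB : 3 ≤ countStar B) : ∃ q, B q = .star ∧ T q ≠ .star ∧ T = update B q (T q) := by
  obtain ⟨⟨hsub, -⟩, hdim⟩ := hcod
  have hst : ∀ i, T i = .star → B i = .star :=
    fun i => apply_eq_star_of_vertexSet_subset hT hsub
  have hTstar : hasStar T := by
    by_contra h
    have h0 : countStar T = 0 := card_eq_zero.2 (filter_eq_empty_iff.2 fun i _ hi => h ⟨i, hi⟩)
    rw [fdim, fdim, if_pos h0, if_neg (by omega)] at hdim; omega
  have hcount : countStar T + 1 = countStar B := by
    have h0 := (countStar_pos hTstar.choose_spec).ne'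
    rw [fdim, fdim, if_neg h0, if_neg (by omega)] at hdim; omega
  set starsT : Finset (Fin n) := {i | T i = .star}
  set starsB : Finset (Fin n) := {i | B i = .star}
  have hsubF : starsT ⊆ starsB := by
    intro i; simpa [starsT, starsB] using hst i
  obtain ⟨q, hq⟩ : ∃ q, starsB \ starsT = {q} := by
    apply card_eq_one.1
    rw [card_sdiff_of_subset hsubF]
    change countStar B - countStar T = 1
    omega
  have hmem : ∀ i, B i = .star ∧ T i ≠ .star ↔ i = q := fun i => by
    simpa [starsT, starsB] using congrArg (i ∈ ·) hq
  obtain ⟨hBq, hTq⟩ := (hmem q).2 rfl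
  refine ⟨q, hBq, hTq, funext fun i => ?_⟩
  rcases eq_or_ne i q with rfl | hiq
  · simp
  rw [update_of_ne hiq]
  by_cases hTi : T i = .star
  · rw [hTi, hst i hTi]
  by_cases hBi : B i = .star
  · exact absurd ((hmem i).1 ⟨hBi, hTi⟩) hiq
  exact apply_eq_of_vertexSet_subset hT hTstar hsub hTi hBi

end Vertices

lemma not_faceSeq_update_one {B : FSeq n} {q : Fin n} (hq : B q = .star)
    (h1 : count1 B + 1 = k) (h2 : 2 ≤ countStar B) : ¬ FaceSeq k (update B q .one) := by
  have hones := count1_update_add B q .one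
  have hstars := countStar_update_add B q .one
  simp only [hq, reduceCtorEq, if_false, if_true] at hones hstars
  rintro (⟨h, -⟩ | ⟨h, -⟩) <;> omega

lemma Vmatch.apply3_of_type3 {m0 m1 : ℕ} {S B : FSeq n} (hm1 : m1 + 1 ≤ k)
    (hV : Vmatch k m0 m1 S B) (hS : Type3 k S) : Apply3 S B := by
  obtain ⟨hS1, -, hR, -⟩ := hS
  rcases hV.2 with ⟨h, -⟩ | ⟨-, h⟩ | ⟨h, -⟩ | ⟨h, -⟩ | ⟨h, -⟩
  · rcases h with ⟨-, h, -⟩ | ⟨-, h, -⟩ | ⟨-, h, -⟩ <;> exact absurd h hR.not_oneRight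
  · exact h
  · exact absurd h.2.2.1 hR.not_oneRight
  · have := h.1; omega
  · have := h.1; omega

def moveStar (S : FSeq n) (p q : Fin n) : FSeq n := update (update S p .star) q .zero

lemma exists_moveStar_of_type3 {m0 m1 : ℕ} {S B T : FSeq n} (hm1 : m1 + 1 ≤ k)
    (hS : FaceSeq k S) (hT : FaceSeq k T) (hV : Vmatch k m0 m1 S B) (hcod : Codim1 k T B)
    (hne : S ≠ T) (h3 : Type3 k S) :
    ∃ p q, IsLeftmostZero S p ∧ S q = .star ∧ p < q ∧ T = moveStar S p q := by
  obtain ⟨p, hp, rfl⟩ := hV.apply3_of_type3 hm1 h3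
  obtain ⟨j, hj⟩ := h3.2.2.1.1
  have hS1 : count1 S + 1 = k := h3.1
  have hS2 : 2 ≤ countStar S := by have := hS.count_bounds hj; omega
  have hBstar := countStar_update_add S p .star
  have hBone := count1_update_add S p .star
  have hSp : S p = .zero := hp.1
  simp only [hSp, reduceCtorEq, if_false, if_true] at hBstar hBone
  obtain ⟨q, hBq, hTq, hTeq⟩ := hcod.exists_eq_update hT (by omega)
  have hTq0 : T q = .zero := by
    rcases hq : T q with _ | _ | _
    · rfl
    · rw [hTeq, hq] at hT
      exact absurd hT (not_faceSeq_update_one hBq (by omega) (by omega))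
    · exact absurd hq hTq
  rw [hTq0] at hTeq
  have hqp : q ≠ p := by
    rintro rfl
    rw [hTeq, update_idem, ← hSp, update_eq_self] at hne
    exact hne rfl
  have hSq : S q = .star := by rwa [update_of_ne hqp] at hBq
  exact ⟨p, q, hp, hSq, h3.2.2.2.lt_of_isLeftmostZero hp hSq, hTeq⟩

section moveStar

variable {S : FSeq n} {p q : Fin n}

lemma moveStar_apply_left (hpq : p ≠ q) : moveStar S p q p = .star := by
  simp [moveStar, hpq]

lemma moveStar_apply_right : moveStar S p q q = .zero := by
  simp [moveStar]

lemma moveStar_apply_of_ne {i : Fin n} (hip : i ≠ p) (hiq : i ≠ q) :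
    moveStar S p q i = S i := by
  simp [moveStar, hip, hiq]

lemma count1_moveStar (hp : S p = .zero) (hq : S q = .star) (hpq : p ≠ q) :
    count1 (moveStar S p q) = count1 S := by
  have hfirst := count1_update_add S p .star
  have hsecond := count1_update_add (update S p .star) q .zero
  simp only [update_of_ne hpq.symm, hp, hq, reduceCtorEq, if_false] at hfirst hsecond
  rw [moveStar]; omega

lemma count0_moveStar (hp : S p = .zero) (hq : S q = .star) (hpq : p ≠ q) :
    count0 (moveStar S p q) = count0 S := by
  have hfirst := count0_update_add S p .star
  have hsecond := count0_update_add (update S p .star) q .zero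
  simp only [update_of_ne hpq.symm, hp, hq, reduceCtorEq, if_false, if_true] at hfirst hsecond
  rw [moveStar]; omega

lemma noZeroLeft_moveStar (hp : IsLeftmostZero S p) (hpq : p < q) :
    NoZeroLeft (moveStar S p q) := by
  have hTp := moveStar_apply_left (S := S) hpq.ne
  refine ⟨⟨p, hTp⟩, fun i hi => ⟨p, ?_, hTp⟩⟩
  rcases eq_or_ne i q with rfl | hiq
  · exact hpq
  have hip : i ≠ p := by rintro rfl; simp [hTp] at hi
  rw [moveStar_apply_of_ne hip hiq] at hi
  exact lt_of_le_of_ne (not_lt.1 fun hip' => hp.2 i hip' hi) hip.symm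

lemma isRightmostStar_moveStar {t : Fin n} (hpq : p < q) (ht : IsRightmostStar S t)
    (hqt : q < t) : IsRightmostStar (moveStar S p q) t := by
  refine ⟨?_, fun j htj => ?_⟩
  · rw [moveStar_apply_of_ne (hpq.trans hqt).ne' hqt.ne']; exact ht.1
  · rw [moveStar_apply_of_ne (hpq.trans (hqt.trans htj)).ne' (hqt.trans htj).ne']
    exact ht.2 j htj

lemma noOneRight_moveStar {t : Fin n} (hS : NoOneRight S) (hpq : p < q)
    (ht : IsRightmostStar S t) (hqt : q < t) : NoOneRight (moveStar S p q) := by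
  have hTt := (isRightmostStar_moveStar hpq ht hqt).1
  refine ⟨⟨t, hTt⟩, fun i hi => ⟨t, ?_, hTt⟩⟩
  have hip : i ≠ p := by rintro rfl; simp [moveStar_apply_left hpq.ne] at hi
  have hiq : i ≠ q := by rintro rfl; simp [moveStar_apply_right] at hi
  rw [moveStar_apply_of_ne hip hiq] at hi
  obtain ⟨j, hij, hj⟩ := hS.2 i hi
  exact hij.trans_le (ht.le hj)

end moveStar

section Types

variable {m0 m1 : ℕ} {T : FSeq n}

lemma type4_or_type10 (h1 : count1 T + 1 = k) (h0 : count0 T + k + 1 ≤ n) (hR : NoOneRight T)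
    (hL : NoZeroLeft T) : Type4 k T ∨ Type10 k T := by
  rcases h0.lt_or_eq with h0 | h0
  · exact Or.inl ⟨h1, h0, hR, hL⟩
  · exact Or.inr ⟨h1, h0, hR, hL⟩

lemma type1_or_type6 (h1 : count1 T + 1 = k) (hR : OneRight T) (hL : NoZeroLeft T) :
    Type1 k m0 m1 T ∨ Type6 m0 m1 T := by
  by_cases hm1 : count1 T = m1
  · rcases lt_trichotomy (count0 T) m0 with h0 | h0 | h0
    · exact Or.inr ⟨hm1, h0, hR, hL⟩
    · exact Or.inl (Or.inr (Or.inr ⟨h1.le, hR, hm1, h0, hL⟩))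
    · exact Or.inl (Or.inr (Or.inl ⟨h1.le, hR, hm1, h0⟩))
  · exact Or.inl (Or.inl ⟨h1.le, hR, hm1⟩)

end Types

theorem vpath_from_type3_general (n k m0 m1 : ℕ) (hm1u : m1 + 1 ≤ k)
    (P : VPath n k m0 m1 0) (h0 : Type3 k (P.a 0)) :
    ((Type4 k (P.a 1) ∨ Type10 k (P.a 1)) ∧
      ∃ i, IsRightmostStar (P.a 0) i ∧ IsRightmostStar (P.a 1) i) ∨
    ((Type1 k m0 m1 (P.a 1) ∨ Type4 k (P.a 1) ∨ Type6 m0 m1 (P.a 1) ∨ Type10 k (P.a 1)) ∧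
      ∃ i, IsRightmostStar (P.a 0) i ∧ P.a 1 i = Letter.zero) := by
  obtain ⟨p, q, hp, hq, hpq, hT⟩ := exists_moveStar_of_type3 hm1u (P.face_a 0) (P.face_a 1)
    (P.mem 0) (P.codim_right 0) (P.step_ne 0) h0
  obtain ⟨hS1, hS0, hSR, -⟩ := h0
  rw [hT]
  have hT1 : count1 (moveStar (P.a 0) p q) + 1 = k := by
    rwa [count1_moveStar hp.1 hq hpq.ne]
  have hT0 : count0 (moveStar (P.a 0) p q) + k + 1 ≤ n := by
    rwa [count0_moveStar hp.1 hq hpq.ne]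
  have hL := noZeroLeft_moveStar hp hpq
  obtain ⟨t, ht⟩ := exists_isRightmostStar hSR.1
  rcases (ht.le hq).lt_or_eq with hqt | rfl
  · exact Or.inl ⟨type4_or_type10 hT1 hT0 (noOneRight_moveStar hSR hpq ht hqt) hL,
      t, ht, isRightmostStar_moveStar hpq ht hqt⟩
  · refine Or.inr ⟨?_, q, ht, moveStar_apply_right⟩
    rcases oneRight_or_noOneRight ⟨p, moveStar_apply_left hpq.ne⟩ with hR | hR
    · rcases type1_or_type6 (m0 := m0) (m1 := m1) hT1 hR hL with h | h
      exacts [Or.inl h, Or.inr (Or.inr (Or.inl h))]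
    · rcases type4_or_type10 hT1 hT0 hR hL with h | h
      exacts [Or.inr (Or.inl h), Or.inr (Or.inr (Or.inr h))]

/-- In a `V`-path `a₀, b₀, a₁` with `a₀` of type 3, either `a₁` is of
type 4 or 10 and the rightmost `∗` of `a₁` is at the same position as the rightmost `∗`
of `a₀`, or `a₁` is of type 1, 4, 6 or 10 and has a `0` at the position of the rightmost
`∗` of `a₀`. -/
theorem vpath_from_type3 (n k m0 m1 : ℕ) (hk1 : 1 ≤ k) (hk2 : k ≤ n - 1)
    (hm0 : m0 + k + 1 ≤ n) (hm1l : 1 ≤ m1) (hm1u : m1 + 1 ≤ k)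
    (P : VPath n k m0 m1 0) (h0 : Type3 k (P.a 0)) :
    ((Type4 k (P.a 1) ∨ Type10 k (P.a 1)) ∧
      ∃ i, IsRightmostStar (P.a 0) i ∧ IsRightmostStar (P.a 1) i) ∨
    ((Type1 k m0 m1 (P.a 1) ∨ Type4 k (P.a 1) ∨ Type6 m0 m1 (P.a 1) ∨ Type10 k (P.a 1)) ∧
      ∃ i, IsRightmostStar (P.a 0) i ∧ P.a 1 i = Letter.zero) :=
  vpath_from_type3_general n k m0 m1 hm1u P h0
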